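/- Circle Principle: Let d_0, d_1, …, d_{t−1} be pairwise distinct elements of a set A, and let 0 ≤ i < j ≤ t−1. Then in the lattice Equ(A) of equivalence relations on A, equ(d_i, d_j) equals the meet of the two joins (equ(d_i,d_{i+1}) ⊔ equ(d_{i+1},d_{i+2}) ⊔ … ⊔ equ(d_{j−1},d_j)) and (equ(d_j,d_{j+1}) ⊔ … ⊔ equ(d_{t−2},d_{t−1}) ⊔ equ(d_{t−1},d_0) ⊔ equ(d_0,d_1) ⊔ … ⊔ equ(d_{i−1},d_i)); that is, the join of the atoms along one arc of the cycle d_0,…,d_{t−1} from d_i to d_j, meeted with the join of the atoms along the complementary arc. -/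

import Mathlib

/-- The least equivalence relation on `A` identifying `u` and `v`
(its only nonsingleton block is `{u, v}`; it is `⊥` when `u = v`). -/
def equ {A : Type*} (u v : A) : Setoid A := sInf {s : Setoid A | s u v}

/-! The arc from `d i` to `d j` and the complementary arc each connect `d i` and `d j`,
which gives `≤`. Conversely, each join only merges the points of its arc into a single block,
and by injectivity the two arcs meet exactly in `{d i, d j}`, so the meet of the two joins
identifies no other pair of points. -/

theorem succ_mod_mem_Ico_union_Iic {t i j r : ℕ} (hi : i ≤ t)
    (hr : r ∈ Finset.Ico j t ∪ Finset.range i) : (r + 1) % t ∈ Set.Ico j t ∪ Set.Iic i := by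
  simp only [Finset.mem_union, Finset.mem_Ico, Finset.mem_range] at hr
  rcases (show r + 1 < t ∨ r + 1 = t by omega) with hlt | heq
  · rw [Nat.mod_eq_of_lt hlt, Set.mem_union, Set.mem_Ico, Set.mem_Iic]
    omega
  · simp [heq]

theorem Icc_inter_Ico_union_Iic {t i j : ℕ} (hij : i ≤ j) (hjt : j < t) :
    Set.Icc i j ∩ (Set.Ico j t ∪ Set.Iic i) = {i, j} := by
  ext r
  simp only [Set.mem_inter_iff, Set.mem_Icc, Set.mem_union, Set.mem_Ico, Set.mem_Iic,
    Set.mem_insert_iff, Set.mem_singleton_iff]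
  omega

section

variable {A : Type*}

theorem equ_rel (u v : A) : equ u v u v := fun _ hs => hs

theorem equ_le_iff {u v : A} {s : Setoid A} : equ u v ≤ s ↔ s u v :=
  ⟨fun h => h (equ_rel u v), fun h => sInf_le h⟩

theorem rel_biSup_equ {ι : Type*} {S : Finset ι} {f g : ι → A} {r : ι} (hr : r ∈ S) :
    (⨆ r ∈ S, equ (f r) (g r)) (f r) (g r) :=
  le_biSup (fun r => equ (f r) (g r)) hr (equ_rel _ _)

theorem Setoid.rel_of_forall_rel_succ (s : Setoid A) (e : ℕ → A) {a b : ℕ} (hab : a ≤ b)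
    (h : ∀ r ∈ Finset.Ico a b, s (e r) (e (r + 1))) : s (e a) (e b) := by
  induction b, hab using Nat.le_induction with
  | base => exact s.refl _
  | succ b hab ih =>
    exact s.trans (ih fun r hr => h r (Finset.Ico_subset_Ico_right b.le_succ hr))
      (h b (Finset.mem_Ico.2 ⟨hab, b.lt_succ_self⟩))

theorem Setoid.rel_of_forall_rel_succ_mod (s : Setoid A) (d : ℕ → A) {t i j : ℕ}
    (hi : i < t) (hj : j < t)
    (h : ∀ r ∈ Finset.Ico j t ∪ Finset.range i, s (d r) (d ((r + 1) % t))) :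
    s (d j) (d i) := by
  -- walk from `j` to `t + i` through the indices read modulo `t`
  have hwalk := s.rel_of_forall_rel_succ (fun r => d (r % t)) (a := j) (b := t + i) (by omega)
    fun r hr => by
      rw [Finset.mem_Ico] at hr
      have hmem : r % t ∈ Finset.Ico j t ∪ Finset.range i := by
        rcases lt_or_ge r t with hrt | hrt
        · rw [Nat.mod_eq_of_lt hrt]; simp [hr.1, hrt]
        · rw [Nat.mod_eq_sub_mod hrt, Nat.mod_eq_of_lt (by omega)]; simp only [Finset.mem_union, Finset.mem_Ico, Finset.mem_range]; omega
      simpa only [Nat.mod_add_mod] using h _ hmem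
  simpa only [Nat.mod_eq_of_lt hj, Nat.add_mod_left, Nat.mod_eq_of_lt hi] using hwalk

def blockSetoid (B : Set A) : Setoid A where
  r x y := x = y ∨ x ∈ B ∧ y ∈ B
  iseqv :=
    { refl := fun _ => Or.inl rfl
      symm := by rintro x y (rfl | ⟨hx, hy⟩); exacts [Or.inl rfl, Or.inr ⟨hy, hx⟩]
      trans := by
        rintro x y z (rfl | ⟨hx, hy⟩) (rfl | ⟨hy', hz⟩)
        exacts [Or.inl rfl, Or.inr ⟨hy', hz⟩, Or.inr ⟨hx, hy⟩, Or.inr ⟨hx, hz⟩] }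

theorem biSup_equ_le_blockSetoid {ι : Type*} {S : Finset ι} {f g : ι → A} {B : Set A}
    (h : ∀ r ∈ S, f r ∈ B ∧ g r ∈ B) : (⨆ r ∈ S, equ (f r) (g r)) ≤ blockSetoid B :=
  iSup₂_le fun r hr => equ_le_iff.2 (Or.inr (h r hr))

theorem blockSetoid_inf_le_equ {B C : Set A} {u v : A} (h : B ∩ C ⊆ {u, v}) :
    blockSetoid B ⊓ blockSetoid C ≤ equ u v := by
  rintro x y ⟨hB, hC⟩
  rcases hB with rfl | ⟨hxB, hyB⟩
  · exact (equ u v).refl x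
  rcases hC with rfl | ⟨hxC, hyC⟩
  · exact (equ u v).refl x
  rcases h ⟨hxB, hxC⟩ with rfl | rfl <;> rcases h ⟨hyB, hyC⟩ with rfl | rfl
  exacts [(equ _ _).refl _, equ_rel _ _, (equ _ _).symm (equ_rel _ _), (equ _ _).refl _]

end

/-- **Circle Principle.** Let `d 0, d 1, …, d (t-1)` be pairwise distinct elements of `A`
and let `0 ≤ i < j ≤ t - 1`.  Then in `Equ(A) = Setoid A`, the atom `equ (d i) (d j)` is
the meet of the join of the atoms along the arc of the cycle `d 0, …, d (t-1)` from
`d i` to `d j` (edges `r, r+1` for `i ≤ r < j`) and the join of the atoms along the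
complementary arc (edges `r, r+1 (mod t)` for `j ≤ r < t` together with `0 ≤ r < i`). -/
theorem circle_principle {A : Type*} (t : ℕ) (d : ℕ → A)
    (hinj : ∀ r < t, ∀ s < t, d r = d s → r = s)
    (i j : ℕ) (hij : i < j) (hjt : j < t) :
    equ (d i) (d j) =
      (⨆ r ∈ Finset.Ico i j, equ (d r) (d (r + 1))) ⊓
      (⨆ r ∈ Finset.Ico j t ∪ Finset.range i, equ (d r) (d ((r + 1) % t))) := by
  apply le_antisymm
  · refine le_inf (equ_le_iff.2 ?_) (equ_le_iff.2 ?_)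
    · exact Setoid.rel_of_forall_rel_succ _ d hij.le fun r hr => rel_biSup_equ hr
    · exact Setoid.symm' _ <| Setoid.rel_of_forall_rel_succ_mod _ d (hij.trans hjt) hjt
        fun r hr => rel_biSup_equ hr
  have hinjOn : Set.InjOn d (Set.Iio t) := fun r hr s hs => hinj r hr s hs
  have hmeet : d '' Set.Icc i j ∩ d '' (Set.Ico j t ∪ Set.Iic i) ⊆ {d i, d j} := by
    rw [← hinjOn.image_inter (fun r hr => lt_of_le_of_lt hr.2 hjt)
      (fun r hr => hr.elim (·.2) fun hri => lt_of_le_of_lt hri (hij.trans hjt)),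
      Icc_inter_Ico_union_Iic hij.le hjt, Set.image_pair]
  refine (inf_le_inf (biSup_equ_le_blockSetoid fun r hr => ?_)
    (biSup_equ_le_blockSetoid fun r hr => ?_)).trans (blockSetoid_inf_le_equ hmeet)
  · rw [Finset.mem_Ico] at hr
    exact ⟨⟨r, ⟨hr.1, hr.2.le⟩, rfl⟩, ⟨r + 1, ⟨by omega, hr.2⟩, rfl⟩⟩
  · refine ⟨⟨r, ?_, rfl⟩, ⟨_, succ_mod_mem_Ico_union_Iic (hij.trans hjt).le hr, rfl⟩⟩
    simp only [Finset.mem_union, Finset.mem_Ico, Finset.mem_range] at hr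
    simp only [Set.mem_union, Set.mem_Ico, Set.mem_Iic]
    omega
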